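/- If Ψ : M_{d_A} → M_{d_C} is completely positive with Kraus operators all of rank one, then Ψ is entanglement breaking. -/

import Mathlib

open Matrix Kronecker BigOperators ComplexOrder

noncomputable section

/-- Partial trace over the first tensor factor. -/
def trFst {m p : Type*} [Fintype m] (X : Matrix (m × p) (m × p) ℂ) : Matrix p p ℂ :=
  fun i j => ∑ a, X (a, i) (a, j)

/-- Partial trace over the second tensor factor. -/
def trSnd {m p : Type*} [Fintype p] (X : Matrix (m × p) (m × p) ℂ) : Matrix m m ℂ :=
  fun i j => ∑ b, X (i, b) (j, b)

/-- Partial transpose on the second tensor factor. -/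
def ptSnd {m p : Type*} (X : Matrix (m × p) (m × p) ℂ) : Matrix (m × p) (m × p) ℂ :=
  fun q r => X (q.1, r.2) (r.1, q.2)

/-- A bipartite matrix is separable if it is a finite sum of Kronecker products of
positive semidefinite matrices (equivalently, lies in the convex hull of such products). -/
def Separable {m p : Type*} [Fintype m] [Fintype p] (X : Matrix (m × p) (m × p) ℂ) : Prop :=
  ∃ (k : ℕ) (Y : Fin k → Matrix m m ℂ) (Z : Fin k → Matrix p p ℂ),
    (∀ i, (Y i).PosSemidef) ∧ (∀ i, (Z i).PosSemidef) ∧ X = ∑ i, (Y i) ⊗ₖ (Z i)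

/-- The amplification `id_m ⊗ Φ` of a map `Φ`, acting blockwise. -/
def amp {dA dB : ℕ} {m : Type*}
    (Φ : Matrix (Fin dA) (Fin dA) ℂ →ₗ[ℂ] Matrix (Fin dB) (Fin dB) ℂ)
    (X : Matrix (m × Fin dA) (m × Fin dA) ℂ) : Matrix (m × Fin dB) (m × Fin dB) ℂ :=
  fun q r => Φ (fun a a' => X (q.1, a) (r.1, a')) q.2 r.2

/-- The amplification `ϑ_m ⊗ Φ` of a map `Φ` (transpose on the first factor). -/
def ampT {dA dB : ℕ} {m : Type*}
    (Φ : Matrix (Fin dA) (Fin dA) ℂ →ₗ[ℂ] Matrix (Fin dB) (Fin dB) ℂ)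
    (X : Matrix (m × Fin dA) (m × Fin dA) ℂ) : Matrix (m × Fin dB) (m × Fin dB) ℂ :=
  fun q r => Φ (fun a a' => X (r.1, a) (q.1, a')) q.2 r.2

/-- Complete positivity. -/
def IsCP {dA dB : ℕ} (Φ : Matrix (Fin dA) (Fin dA) ℂ →ₗ[ℂ] Matrix (Fin dB) (Fin dB) ℂ) : Prop :=
  ∀ (n : ℕ) (X : Matrix (Fin n × Fin dA) (Fin n × Fin dA) ℂ),
    X.PosSemidef → (amp Φ X).PosSemidef

/-- Complete copositivity. -/
def IsCoCP {dA dB : ℕ} (Φ : Matrix (Fin dA) (Fin dA) ℂ →ₗ[ℂ] Matrix (Fin dB) (Fin dB) ℂ) : Prop :=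
  ∀ (n : ℕ) (X : Matrix (Fin n × Fin dA) (Fin n × Fin dA) ℂ),
    X.PosSemidef → (ampT Φ X).PosSemidef

/-- A map is PPT if it is completely positive and completely copositive. -/
def IsPPT {dA dB : ℕ} (Φ : Matrix (Fin dA) (Fin dA) ℂ →ₗ[ℂ] Matrix (Fin dB) (Fin dB) ℂ) : Prop :=
  IsCP Φ ∧ IsCoCP Φ

/-- Entanglement breaking maps. -/
def IsEB {dA dB : ℕ} (Φ : Matrix (Fin dA) (Fin dA) ℂ →ₗ[ℂ] Matrix (Fin dB) (Fin dB) ℂ) : Prop :=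
  ∀ (n : ℕ) (X : Matrix (Fin n × Fin dA) (Fin n × Fin dA) ℂ),
    X.PosSemidef → Separable (amp Φ X)

/-- The Choi matrix of a linear map. -/
def Choi {dA dB : ℕ} (Φ : Matrix (Fin dA) (Fin dA) ℂ →ₗ[ℂ] Matrix (Fin dB) (Fin dB) ℂ) :
    Matrix (Fin dA × Fin dB) (Fin dA × Fin dB) ℂ :=
  ∑ i, ∑ j, (single i j (1 : ℂ)) ⊗ₖ Φ (single i j (1 : ℂ))

/-! Writing each Kraus operator as `A k = vecMulVec (v k) (w k)`, the amplification
`(id ⊗ Ψ) X` becomes `∑ k, Y k ⊗ vecMulVec (v k) (star (v k))`, where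
`Y k = (1 ⊗ w kᵀ) X (1 ⊗ w kᵀ)ᴴ` is positive semidefinite whenever `X` is. -/

namespace Matrix

theorem exists_eq_vecMulVec_of_rank_le_one {K m n : Type*} [Field K] [Fintype n]
    (M : Matrix m n K) (h : M.rank ≤ 1) : ∃ (v : m → K) (w : n → K), M = vecMulVec v w := by
  classical
  obtain ⟨u, hu⟩ := finrank_le_one_iff.mp h
  choose c hc using fun a => hu ⟨M.col a, M.mulVec_single_one a ▸ LinearMap.mem_range_self _ _⟩
  refine ⟨u, c, ext fun i a => ?_⟩
  simpa [vecMulVec_apply, mul_comm] using (congrFun (congrArg Subtype.val (hc a)) i).symm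

theorem vecMulVec_mul_mul_conjTranspose_vecMulVec {R m n : Type*} [CommSemiring R] [StarRing R]
    [Fintype n] (v : m → R) (w : n → R) (Y : Matrix n n R) :
    vecMulVec v w * Y * (vecMulVec v w)ᴴ = ((w ᵥ* Y) ⬝ᵥ star w) • vecMulVec v (star v) := by
  rw [vecMulVec_mul, conjTranspose_vecMulVec, vecMulVec_mul_vecMulVec, vecMulVec_smul]

section contractSnd

variable {R m p : Type*} [CommRing R] [StarRing R] [Fintype p]

def contractSnd (w : p → R) (X : Matrix (m × p) (m × p) R) : Matrix m m R :=
  of fun i j => (w ᵥ* of fun a a' => X (i, a) (j, a')) ⬝ᵥ star w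

theorem contractSnd_eq_submatrix [Fintype m] [DecidableEq m] (w : p → R)
    (X : Matrix (m × p) (m × p) R) :
    contractSnd w X = (((1 : Matrix m m R) ⊗ₖ replicateRow Unit w) * X *
      ((1 : Matrix m m R) ⊗ₖ replicateRow Unit w)ᴴ).submatrix (·, ()) (·, ()) := by
  ext i j
  simp [contractSnd, mul_apply, Fintype.sum_prod_type, one_apply, vecMul, dotProduct,
    Finset.sum_mul, apply_ite, Finset.sum_ite_irrel]

theorem PosSemidef.contractSnd [PartialOrder R] [Fintype m] {X : Matrix (m × p) (m × p) R}
    (hX : X.PosSemidef) (w : p → R) : (contractSnd w X).PosSemidef := by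
  classical
  rw [contractSnd_eq_submatrix]
  exact (hX.mul_mul_conjTranspose_same _).submatrix _

end contractSnd

end Matrix

theorem amp_eq_sum_kronecker_of_rank_one_kraus {dA dB : ℕ} {ι m : Type*} [Fintype ι]
    (Ψ : Matrix (Fin dA) (Fin dA) ℂ →ₗ[ℂ] Matrix (Fin dB) (Fin dB) ℂ)
    (v : ι → Fin dB → ℂ) (w : ι → Fin dA → ℂ)
    (hΨ : ∀ Y, Ψ Y = ∑ k, vecMulVec (v k) (w k) * Y * (vecMulVec (v k) (w k))ᴴ)
    (X : Matrix (m × Fin dA) (m × Fin dA) ℂ) :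
    amp Ψ X = ∑ k, contractSnd (w k) X ⊗ₖ vecMulVec (v k) (star (v k)) := by
  ext ⟨i, c⟩ ⟨j, c'⟩
  refine (congrFun₂ (hΨ (of fun a a' => X (i, a) (j, a'))) c c').trans ?_
  simp only [vecMulVec_mul_mul_conjTranspose_vecMulVec, Matrix.sum_apply, Matrix.smul_apply,
    kroneckerMap_apply, contractSnd, of_apply, smul_eq_mul]

theorem stmt18 {dA dC K : ℕ}
    (Ψ : Matrix (Fin dA) (Fin dA) ℂ →ₗ[ℂ] Matrix (Fin dC) (Fin dC) ℂ)
    (A : Fin K → Matrix (Fin dC) (Fin dA) ℂ)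
    (hKraus : ∀ X, Ψ X = ∑ k, A k * X * (A k)ᴴ)
    (hrk : ∀ k, (A k).rank ≤ 1) :
    IsEB Ψ := by
  intro n X hX
  choose v w hA using fun k => (A k).exists_eq_vecMulVec_of_rank_le_one (hrk k)
  exact ⟨K, fun k => contractSnd (w k) X, fun k => vecMulVec (v k) (star (v k)),
    fun k => hX.contractSnd (w k), fun k => posSemidef_vecMulVec_self_star (v k),
    amp_eq_sum_kronecker_of_rank_one_kraus Ψ v w (by simpa only [hA] using hKraus) X⟩
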